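/- arXiv:1309.3916 — 3 statements merged into one kernel-verified Lean document; each statement's English description precedes it below -/
import Mathlib

section
/- Let λ ∈ (0,1) and let ν be a probability measure on [0,1] that is absolutely continuous with almost everywhere strictly positive density. Let ν^λ_∞ denote the law of (1-λ)∑_{n=0}^∞ λ^n ε_n with (ε_n) i.i.d. of law ν, and set α(i,j) = ∫ r^i (1-r)^j ν^λ_∞(dr) (which is strictly positive for all i,j ∈ ℕ). For k₁ ≤ n₁, k₂ ≤ n₂ define A(k₁,k₂,n₁,n₂) = C(n₁,k₁) C(n₂,k₂) λ^{k₁+k₂} (1-λ)^{n₁+n₂-k₁-k₂} ∫₀¹ ε^{n₁-k₁}(1-ε)^{n₂-k₂} ν(dε). Then: (i) for every r ∈ [0,1], ∫₀¹ (λr+(1-λ)ε)^{n₁} (1-λr-(1-λ)ε)^{n₂} ν(dε) = ∑_{k₁=0}^{n₁} ∑_{k₂=0}^{n₂} A(k₁,k₂,n₁,n₂) r^{k₁}(1-r)^{k₂}; (ii) ∑_{k₁=0}^{n₁} ∑_{k₂=0}^{n₂} A(k₁,k₂,n₁,n₂) α(k₁,k₂) = α(n₁,n₂), so that Q(k₁,k₂,n₁,n₂)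 := A(k₁,k₂,n₁,n₂) α(k₁,k₂)/α(n₁,n₂) are nonnegative and sum to 1; (iii) with D(n₁,n₂,r) = r^{n₁}(1-r)^{n₂}/α(n₁,n₂), one has ∫₀¹ D(n₁,n₂, λr+(1-λ)ε) ν(dε) = ∑_{k₁=0}^{n₁} ∑_{k₂=0}^{n₂} Q(k₁,k₂,n₁,n₂) D(k₁,k₂,r) for all r ∈ [0,1]. -/
open MeasureTheory Set ProbabilityTheory Filter Topology ENNReal

private lemma aux_abs_le_one {x : ℝ} (hx : x ∈ Set.Icc (0:ℝ) 1) (k l : ℕ) :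
    |x ^ k * (1 - x) ^ l| ≤ 1 := by
  obtain ⟨h0, h1⟩ := hx
  rw [abs_of_nonneg (mul_nonneg (pow_nonneg h0 _) (pow_nonneg (by linarith) _))]
  calc x ^ k * (1 - x) ^ l ≤ 1 * 1 := by
        apply mul_le_mul (pow_le_one₀ h0 h1) (pow_le_one₀ (by linarith) (by linarith))
          (pow_nonneg (by linarith) _) zero_le_one
    _ = 1 := by ring

private lemma aux_phi_meas (k l : ℕ) : Measurable (fun x : ℝ => x ^ k * (1 - x) ^ l) :=
  ((measurable_id.pow_const k).mul ((measurable_const.sub measurable_id).pow_const l))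

private lemma aux_integrable {μ : Measure ℝ} [IsFiniteMeasure μ]
    (hμ : ∀ᵐ x ∂μ, x ∈ Set.Icc (0:ℝ) 1) (k l : ℕ) :
    Integrable (fun x => x ^ k * (1 - x) ^ l) μ := by
  refine Integrable.mono' (integrable_const 1) (aux_phi_meas k l).aestronglyMeasurable ?_
  filter_upwards [hμ] with x hx
  calc ‖x ^ k * (1 - x) ^ l‖ = |x ^ k * (1 - x) ^ l| := rfl
    _ ≤ 1 := aux_abs_le_one hx k l

private lemma aux_expand (lam r e : ℝ) (n₁ n₂ : ℕ) :
    (lam * r + (1 - lam) * e) ^ n₁ * (1 - (lam * r + (1 - lam) * e)) ^ n₂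
      = ∑ k₁ ∈ Finset.range (n₁ + 1), ∑ k₂ ∈ Finset.range (n₂ + 1),
          ((n₁.choose k₁ : ℝ) * (n₂.choose k₂ : ℝ) * (lam * r) ^ k₁ * (lam * (1 - r)) ^ k₂
            * (1 - lam) ^ (n₁ - k₁) * (1 - lam) ^ (n₂ - k₂))
            * (e ^ (n₁ - k₁) * (1 - e) ^ (n₂ - k₂)) := by
  have h2 : 1 - (lam * r + (1 - lam) * e) = lam * (1 - r) + (1 - lam) * (1 - e) := by ring
  rw [h2, add_pow, add_pow, Finset.sum_mul_sum]
  refine Finset.sum_congr rfl fun k₁ _ => Finset.sum_congr rfl fun k₂ _ => ?_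
  rw [mul_pow (1 - lam) e, mul_pow (1 - lam) (1 - e)]
  ring

private lemma aux_key_i {ν : Measure ℝ} [IsProbabilityMeasure ν]
    (hν : ∀ᵐ e ∂ν, e ∈ Set.Icc (0:ℝ) 1) {lam : ℝ} (n₁ n₂ : ℕ) (r : ℝ) :
    ∫ e, (lam * r + (1 - lam) * e) ^ n₁ * (1 - (lam * r + (1 - lam) * e)) ^ n₂ ∂ν
      = ∑ k₁ ∈ Finset.range (n₁ + 1), ∑ k₂ ∈ Finset.range (n₂ + 1),
          ((n₁.choose k₁ : ℝ) * (n₂.choose k₂ : ℝ) * lam ^ (k₁ + k₂)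
            * (1 - lam) ^ (n₁ + n₂ - k₁ - k₂)
            * ∫ e, e ^ (n₁ - k₁) * (1 - e) ^ (n₂ - k₂) ∂ν) * (r ^ k₁ * (1 - r) ^ k₂) := by
  have hrw : (fun e => (lam * r + (1 - lam) * e) ^ n₁ * (1 - (lam * r + (1 - lam) * e)) ^ n₂)
      = fun e => ∑ k₁ ∈ Finset.range (n₁ + 1), ∑ k₂ ∈ Finset.range (n₂ + 1),
          ((n₁.choose k₁ : ℝ) * (n₂.choose k₂ : ℝ) * (lam * r) ^ k₁ * (lam * (1 - r)) ^ k₂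
            * (1 - lam) ^ (n₁ - k₁) * (1 - lam) ^ (n₂ - k₂))
            * (e ^ (n₁ - k₁) * (1 - e) ^ (n₂ - k₂)) := funext fun e => aux_expand lam r e n₁ n₂
  rw [hrw]
  rw [integral_finset_sum _ fun k₁ _ => integrable_finset_sum _ fun k₂ _ =>
    (aux_integrable hν (n₁ - k₁) (n₂ - k₂)).const_mul _]
  refine Finset.sum_congr rfl fun k₁ hk₁ => ?_
  rw [integral_finset_sum _ fun k₂ _ => (aux_integrable hν (n₁ - k₁) (n₂ - k₂)).const_mul _]
  refine Finset.sum_congr rfl fun k₂ hk₂ => ?_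
  rw [MeasureTheory.integral_const_mul]
  have h1 : k₁ ≤ n₁ := Nat.lt_succ_iff.mp (Finset.mem_range.mp hk₁)
  have h2 : k₂ ≤ n₂ := Nat.lt_succ_iff.mp (Finset.mem_range.mp hk₂)
  have h3 : n₁ + n₂ - k₁ - k₂ = (n₁ - k₁) + (n₂ - k₂) := by omega
  rw [h3, pow_add, pow_add, mul_pow lam (1 - r), mul_pow lam r]
  ring

private lemma aux_precomp {Ω : Type*} [MeasurableSpace Ω] {μ : Measure Ω}
    {f : ℕ → Ω → ℝ} (h : iIndepFun f μ)
    {g : ℕ → ℕ} (hg : Function.Injective g) :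
    iIndepFun (fun i => f (g i)) μ := by
  classical
  rw [iIndepFun_iff] at h ⊢
  intro s f' hf'
  have hinv : ∀ i, Function.invFun g (g i) = i := Function.leftInverse_invFun hg
  have key := h (s.image g) (f' := fun j => f' (Function.invFun g j)) ?_
  · have h1 : (⋂ j ∈ s.image g, f' (Function.invFun g j)) = ⋂ i ∈ s, f' i := by
      rw [Finset.set_biInter_finset_image]
      exact Set.iInter₂_congr fun i _ => by rw [hinv]
    have h2 : (∏ j ∈ s.image g, μ (f' (Function.invFun g j))) = ∏ i ∈ s, μ (f' i) := by
      rw [Finset.prod_image (fun a _ b _ hab => hg hab)]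
      exact Finset.prod_congr rfl fun i _ => by rw [hinv]
    rw [h1, h2] at key
    exact key
  · intro j hj
    obtain ⟨i, hi, rfl⟩ := Finset.mem_image.mp hj
    simp only [hinv]
    exact hf' i hi

private lemma aux_map_sum_eq {Ω : Type*} [MeasurableSpace Ω] {Pr : Measure Ω}
    [IsProbabilityMeasure Pr] {ν : Measure ℝ} (lam : ℝ)
    {ε δ : ℕ → Ω → ℝ}
    (hm1 : ∀ n, Measurable (ε n)) (hl1 : ∀ n, Measure.map (ε n) Pr = ν)
    (hi1 : iIndepFun ε Pr)
    (hm2 : ∀ n, Measurable (δ n)) (hl2 : ∀ n, Measure.map (δ n) Pr = ν)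
    (hi2 : iIndepFun δ Pr) :
    ∀ N, Measure.map (fun ω => ∑ n ∈ Finset.range N, lam ^ n * ε n ω) Pr
      = Measure.map (fun ω => ∑ n ∈ Finset.range N, lam ^ n * δ n ω) Pr := by
  intro N
  induction N with
  | zero => simp
  | succ N ih =>
    set s : Ω → ℝ := fun ω => ∑ n ∈ Finset.range N, lam ^ n * ε n ω with hs_def
    set t : Ω → ℝ := fun ω => ∑ n ∈ Finset.range N, lam ^ n * δ n ω with ht_def
    set u : Ω → ℝ := fun ω => lam ^ N * ε N ω with hu_def
    set v : Ω → ℝ := fun ω => lam ^ N * δ N ω with hv_def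
    have hs : Measurable s := Finset.measurable_sum _ fun n _ => (hm1 n).const_mul _
    have ht : Measurable t := Finset.measurable_sum _ fun n _ => (hm2 n).const_mul _
    have hu : Measurable u := (hm1 N).const_mul _
    have hv : Measurable v := (hm2 N).const_mul _
    have hind1 : IndepFun s u Pr := by
      have hf : iIndepFun (fun n ω => lam ^ n * ε n ω) Pr :=
        hi1.comp (fun n x => lam ^ n * x) (fun n => measurable_const_mul _)
      have := hf.indepFun_finset_sum_of_notMem
        (fun n => (hm1 n).const_mul _) (Finset.notMem_range_self (n := N))
      have hsum_eq : (∑ j ∈ Finset.range N, fun ω => lam ^ j * ε j ω) = s := by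
        funext ω; simp [hs_def, Finset.sum_apply]
      rwa [hsum_eq] at this
    have hind2 : IndepFun t v Pr := by
      have hf : iIndepFun (fun n ω => lam ^ n * δ n ω) Pr :=
        hi2.comp (fun n x => lam ^ n * x) (fun n => measurable_const_mul _)
      have := hf.indepFun_finset_sum_of_notMem
        (fun n => (hm2 n).const_mul _) (Finset.notMem_range_self (n := N))
      have hsum_eq : (∑ j ∈ Finset.range N, fun ω => lam ^ j * δ j ω) = t := by
        funext ω; simp [ht_def, Finset.sum_apply]
      rwa [hsum_eq] at this
    have hmu : Measure.map u Pr = Measure.map (fun x => lam ^ N * x) ν := by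
      rw [← hl1 N, Measure.map_map (measurable_const_mul _) (hm1 N)]; rfl
    have hmv : Measure.map v Pr = Measure.map (fun x => lam ^ N * x) ν := by
      rw [← hl2 N, Measure.map_map (measurable_const_mul _) (hm2 N)]; rfl
    have pair1 : Measure.map (fun ω => (s ω, u ω)) Pr
        = (Measure.map s Pr).prod (Measure.map u Pr) :=
      (indepFun_iff_map_prod_eq_prod_map_map hs.aemeasurable hu.aemeasurable).mp hind1
    have pair2 : Measure.map (fun ω => (t ω, v ω)) Pr
        = (Measure.map t Pr).prod (Measure.map v Pr) :=
      (indepFun_iff_map_prod_eq_prod_map_map ht.aemeasurable hv.aemeasurable).mp hind2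
    have hpairs : Measure.map (fun ω => (s ω, u ω)) Pr = Measure.map (fun ω => (t ω, v ω)) Pr := by
      rw [pair1, pair2, ih, hmu, hmv]
    calc Measure.map (fun ω => ∑ n ∈ Finset.range (N + 1), lam ^ n * ε n ω) Pr
        = Measure.map ((fun p : ℝ × ℝ => p.1 + p.2) ∘ (fun ω => (s ω, u ω))) Pr := by
          congr 1; funext ω; simp [hs_def, hu_def, Finset.sum_range_succ]
      _ = Measure.map (fun p : ℝ × ℝ => p.1 + p.2) (Measure.map (fun ω => (s ω, u ω)) Pr) :=
          (Measure.map_map measurable_add (hs.prodMk hu)).symm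
      _ = Measure.map (fun p : ℝ × ℝ => p.1 + p.2) (Measure.map (fun ω => (t ω, v ω)) Pr) := by
          rw [hpairs]
      _ = Measure.map ((fun p : ℝ × ℝ => p.1 + p.2) ∘ (fun ω => (t ω, v ω))) Pr :=
          Measure.map_map measurable_add (ht.prodMk hv)
      _ = Measure.map (fun ω => ∑ n ∈ Finset.range (N + 1), lam ^ n * δ n ω) Pr := by
          congr 1; funext ω; simp [ht_def, hv_def, Finset.sum_range_succ]

/-- duality for the two-agent wealth distribution model with total wealth 1
and saving propensity `λ ∈ (0,1)`. With `ν^λ_∞` the law of `(1-λ)∑ λ^n ε_n`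
(`ε_n` i.i.d. of law `ν`), `α(i,j) = ∫ r^i(1-r)^j ν^λ_∞(dr)` (strictly positive), and
`A(k₁,k₂,n₁,n₂) = C(n₁,k₁)C(n₂,k₂) λ^{k₁+k₂}(1-λ)^{n₁+n₂-k₁-k₂} ∫ ε^{n₁-k₁}(1-ε)^{n₂-k₂} ν(dε)`:
(i) the one-step operator maps `r^{n₁}(1-r)^{n₂}` to `∑∑ A r^{k₁}(1-r)^{k₂}`;
(ii) `∑∑ A(k₁,k₂,n₁,n₂) α(k₁,k₂) = α(n₁,n₂)`, so the
`Q(k₁,k₂,n₁,n₂) = A α(k₁,k₂)/α(n₁,n₂)` are nonnegative and sum to one;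
(iii) with `D(n₁,n₂,r) = r^{n₁}(1-r)^{n₂}/α(n₁,n₂)` one has the duality relation
`∫ D(n₁,n₂, λr+(1-λ)ε) ν(dε) = ∑∑ Q(k₁,k₂,n₁,n₂) D(k₁,k₂,r)`. -/
theorem wealth_model_duality
    {Ω : Type*} [MeasurableSpace Ω] (Pr : Measure Ω) [IsProbabilityMeasure Pr]
    (lam : ℝ) (hlam : lam ∈ Ioo (0:ℝ) 1)
    (ν : Measure ℝ) [IsProbabilityMeasure ν] (hνsupp : ν (Icc 0 1) = 1)
    (hac : ν ≪ volume) (hfull : volume.restrict (Icc 0 1) ≪ ν)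
    (ε : ℕ → Ω → ℝ)
    (hmeas : ∀ n, Measurable (ε n))
    (hlaw : ∀ n, Measure.map (ε n) Pr = ν)
    (hindep : iIndepFun ε Pr)
    (νinf : Measure ℝ)
    (hνinf : νinf = Measure.map (fun ω => (1 - lam) * ∑' n, lam ^ n * ε n ω) Pr)
    (a : ℕ → ℕ → ℝ)
    (ha : ∀ i j, a i j = ∫ r, r ^ i * (1 - r) ^ j ∂νinf)
    (A : ℕ → ℕ → ℕ → ℕ → ℝ)
    (hA : ∀ k₁ k₂ n₁ n₂, A k₁ k₂ n₁ n₂ =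
      (n₁.choose k₁ : ℝ) * (n₂.choose k₂ : ℝ) * lam ^ (k₁ + k₂)
        * (1 - lam) ^ (n₁ + n₂ - k₁ - k₂)
        * ∫ e, e ^ (n₁ - k₁) * (1 - e) ^ (n₂ - k₂) ∂ν) :
    (∀ i j, 0 < a i j) ∧
    (∀ n₁ n₂ : ℕ, ∀ r ∈ Icc (0:ℝ) 1,
      ∫ e, (lam * r + (1 - lam) * e) ^ n₁ * (1 - lam * r - (1 - lam) * e) ^ n₂ ∂ν
        = ∑ k₁ ∈ Finset.range (n₁ + 1), ∑ k₂ ∈ Finset.range (n₂ + 1),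
            A k₁ k₂ n₁ n₂ * (r ^ k₁ * (1 - r) ^ k₂)) ∧
    (∀ n₁ n₂ : ℕ,
      ∑ k₁ ∈ Finset.range (n₁ + 1), ∑ k₂ ∈ Finset.range (n₂ + 1),
        A k₁ k₂ n₁ n₂ * a k₁ k₂ = a n₁ n₂) ∧
    (∀ n₁ n₂ : ℕ,
      (∀ k₁ k₂ : ℕ, 0 ≤ A k₁ k₂ n₁ n₂ * a k₁ k₂ / a n₁ n₂) ∧
      ∑ k₁ ∈ Finset.range (n₁ + 1), ∑ k₂ ∈ Finset.range (n₂ + 1),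
        A k₁ k₂ n₁ n₂ * a k₁ k₂ / a n₁ n₂ = 1) ∧
    (∀ n₁ n₂ : ℕ, ∀ r ∈ Icc (0:ℝ) 1,
      ∫ e, ((lam * r + (1 - lam) * e) ^ n₁ * (1 - (lam * r + (1 - lam) * e)) ^ n₂
          / a n₁ n₂) ∂ν
        = ∑ k₁ ∈ Finset.range (n₁ + 1), ∑ k₂ ∈ Finset.range (n₂ + 1),
            (A k₁ k₂ n₁ n₂ * a k₁ k₂ / a n₁ n₂)
              * (r ^ k₁ * (1 - r) ^ k₂ / a k₁ k₂)) := by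
  classical
  obtain ⟨hl0, hl1⟩ := hlam
  have hlam1 : (0:ℝ) < 1 - lam := by linarith
  -- ν is a.e. supported on [0,1], in fact on (0,1)
  have hνae : ∀ᵐ e ∂ν, e ∈ Icc (0:ℝ) 1 := by
    rw [ae_iff]
    have : {e : ℝ | ¬ e ∈ Icc (0:ℝ) 1} = (Icc (0:ℝ) 1)ᶜ := rfl
    rw [this, prob_compl_eq_zero_iff measurableSet_Icc]
    exact hνsupp
  have hν01 : ν ({0, 1} : Set ℝ) = 0 := by
    apply hac
    exact Set.Finite.measure_zero ((Set.finite_singleton 1).insert 0) volume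
  have hνIoo : ∀ᵐ e ∂ν, e ∈ Ioo (0:ℝ) 1 := by
    have hsub : (Ioo (0:ℝ) 1)ᶜ ⊆ (Icc (0:ℝ) 1)ᶜ ∪ ({0, 1} : Set ℝ) := by
      intro x hx
      by_cases h : x ∈ Icc (0:ℝ) 1
      · obtain ⟨h0, h1⟩ := h
        right
        simp only [mem_compl_iff, mem_Ioo, not_and_or, not_lt] at hx
        simp only [mem_insert_iff, mem_singleton_iff]
        rcases hx with h' | h'
        · exact Or.inl (le_antisymm h' h0)
        · exact Or.inr (le_antisymm h1 h')
      · left; exact h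
    rw [ae_iff]
    have hIccc : ν (Icc (0:ℝ) 1)ᶜ = 0 := by
      rw [prob_compl_eq_zero_iff measurableSet_Icc]; exact hνsupp
    have : ν ((Ioo (0:ℝ) 1)ᶜ) = 0 :=
      le_antisymm (le_trans (measure_mono hsub)
        (le_trans (measure_union_le _ _) (by rw [hIccc, hν01]; simp))) zero_le
    exact this
  -- the good set
  set G : Set Ω := ⋂ n, ε n ⁻¹' (Ioo 0 1) with hG_def
  set G' : Set Ω := ⋂ n, ε (n + 1) ⁻¹' (Ioo 0 1) with hG'_def
  have hGmeas : MeasurableSet G := MeasurableSet.iInter fun n => (hmeas n) measurableSet_Ioo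
  have hνIoo0 : ν ((Ioo (0:ℝ) 1)ᶜ) = 0 := ae_iff.mp hνIoo
  have hGae : ∀ᵐ ω ∂Pr, ω ∈ G := by
    have h1 : ∀ n, ∀ᵐ ω ∂Pr, ε n ω ∈ Ioo (0:ℝ) 1 := by
      intro n
      rw [ae_iff]
      show Pr (ε n ⁻¹' (Ioo (0:ℝ) 1)ᶜ) = 0
      rw [← Measure.map_apply (hmeas n) measurableSet_Ioo.compl, hlaw n]
      exact hνIoo0
    filter_upwards [ae_all_iff.mpr h1] with ω hω
    exact mem_iInter.mpr fun n => hω n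
  -- summability facts
  have hsum : ∀ c : ℕ → ℝ, (∀ n, c n ∈ Icc (0:ℝ) 1) → Summable fun n => lam ^ n * c n := by
    intro c hc
    refine Summable.of_nonneg_of_le (fun n => mul_nonneg (pow_nonneg hl0.le _) (hc n).1)
      (fun n => ?_) (summable_geometric_of_lt_one hl0.le hl1)
    exact mul_le_of_le_one_right (pow_nonneg hl0.le _) (hc n).2
  have htsum_mem : ∀ c : ℕ → ℝ, (∀ n, c n ∈ Icc (0:ℝ) 1) →
      (1 - lam) * (∑' n, lam ^ n * c n) ∈ Icc (0:ℝ) 1 := by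
    intro c hc
    have h1 : (0:ℝ) ≤ ∑' n, lam ^ n * c n :=
      tsum_nonneg fun n => mul_nonneg (pow_nonneg hl0.le _) (hc n).1
    have h2 : (∑' n, lam ^ n * c n) ≤ (1 - lam)⁻¹ := by
      have := Summable.tsum_le_tsum (f := fun n => lam ^ n * c n) (g := fun n => lam ^ n)
        (fun n => mul_le_of_le_one_right (pow_nonneg hl0.le _) (hc n).2)
        (hsum c hc) (summable_geometric_of_lt_one hl0.le hl1)
      rwa [tsum_geometric_of_lt_one hl0.le hl1] at this
    constructor
    · exact mul_nonneg hlam1.le h1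
    · calc (1 - lam) * (∑' n, lam ^ n * c n) ≤ (1 - lam) * (1 - lam)⁻¹ :=
          mul_le_mul_of_nonneg_left h2 hlam1.le
        _ = 1 := mul_inv_cancel₀ hlam1.ne'
  set Xf : Ω → ℝ := fun ω => (1 - lam) * ∑' n, lam ^ n * ε n ω with hXf_def
  set Yf : Ω → ℝ := fun ω => (1 - lam) * ∑' n, lam ^ n * ε (n + 1) ω with hYf_def
  set X : Ω → ℝ := G.indicator Xf with hX_def
  set Y : Ω → ℝ := G'.indicator Yf with hY_def
  have hGsub : G ⊆ G' := fun ω hω => mem_iInter.mpr fun n => mem_iInter.mp hω (n + 1)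
  have hGmem : ∀ ω ∈ G, ∀ n, ε n ω ∈ Ioo (0:ℝ) 1 := fun ω hω n => mem_iInter.mp hω n
  have hG'mem : ∀ ω ∈ G', ∀ n, ε (n + 1) ω ∈ Ioo (0:ℝ) 1 := fun ω hω n => mem_iInter.mp hω n
  have hXmem : ∀ ω, X ω ∈ Icc (0:ℝ) 1 := by
    intro ω
    rw [hX_def]
    by_cases hω : ω ∈ G
    · rw [indicator_of_mem hω, hXf_def]
      exact htsum_mem _ fun n => ⟨(hGmem ω hω n).1.le, (hGmem ω hω n).2.le⟩
    · rw [indicator_of_notMem hω]; exact ⟨le_rfl, zero_le_one⟩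
  have hYmem : ∀ ω, Y ω ∈ Icc (0:ℝ) 1 := by
    intro ω
    rw [hY_def]
    by_cases hω : ω ∈ G'
    · rw [indicator_of_mem hω, hYf_def]
      exact htsum_mem _ fun n => ⟨(hG'mem ω hω n).1.le, (hG'mem ω hω n).2.le⟩
    · rw [indicator_of_notMem hω]; exact ⟨le_rfl, zero_le_one⟩
  have hXlim : ∀ ω, Tendsto (fun N => G.indicator
      (fun ω' => (1 - lam) * ∑ n ∈ Finset.range N, lam ^ n * ε n ω') ω) atTop (𝓝 (X ω)) := by
    intro ω
    by_cases hω : ω ∈ G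
    · simp only [indicator_of_mem hω, hX_def, hXf_def]
      have hsm := hsum (fun n => ε n ω) fun n => ⟨(hGmem ω hω n).1.le, (hGmem ω hω n).2.le⟩
      exact (hsm.hasSum.tendsto_sum_nat).const_mul (1 - lam)
    · simp only [indicator_of_notMem hω, hX_def]
      exact tendsto_const_nhds
  have hXmeas : Measurable X :=
    measurable_of_tendsto_metrizable
      (fun N => (((Finset.measurable_sum _ fun n _ => (hmeas n).const_mul _).const_mul
        (1 - lam)).indicator hGmeas))
      (tendsto_pi_nhds.mpr hXlim)
  -- Yf (tail sum) as a plain function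
  have hXY : ∀ ω ∈ G, X ω = lam * Yf ω + (1 - lam) * ε 0 ω := by
    intro ω hω
    have hc : ∀ n, ε n ω ∈ Icc (0:ℝ) 1 :=
      fun n => ⟨(hGmem ω hω n).1.le, (hGmem ω hω n).2.le⟩
    have hsm := hsum (fun n => ε n ω) hc
    rw [hX_def, indicator_of_mem hω, hXf_def, hYf_def]
    have h0 : (∑' n, lam ^ n * ε n ω) = ε 0 ω + lam * ∑' n, lam ^ n * ε (n + 1) ω := by
      rw [Summable.tsum_eq_zero_add hsm]
      simp only [pow_zero, one_mul]
      congr 1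
      rw [← tsum_mul_left]
      exact tsum_congr fun n => by ring
    show (1 - lam) * ∑' n, lam ^ n * ε n ω
      = lam * ((1 - lam) * ∑' n, lam ^ n * ε (n + 1) ω) + (1 - lam) * ε 0 ω
    rw [h0]; ring
  have hYfmem : ∀ ω ∈ G, Yf ω ∈ Icc (0:ℝ) 1 := by
    intro ω hω
    rw [hYf_def]
    exact htsum_mem _ fun n => ⟨(hGmem ω hω (n + 1)).1.le, (hGmem ω hω (n + 1)).2.le⟩
  have hXae_eq : X =ᵐ[Pr] Xf := by
    filter_upwards [hGae] with ω hω
    rw [hX_def, indicator_of_mem hω]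
  have hXfae : AEMeasurable Xf Pr := hXmeas.aemeasurable.congr hXae_eq
  have ha2 : ∀ k l, a k l = ∫ ω, (X ω) ^ k * (1 - X ω) ^ l ∂Pr := by
    intro k l
    rw [ha k l, hνinf]
    rw [integral_map hXfae (aux_phi_meas k l).aestronglyMeasurable]
    refine integral_congr_ae ?_
    filter_upwards [hXae_eq] with ω hω
    rw [hω]
  -- positivity of a
  have hXpos : ∀ ω ∈ G, X ω ∈ Ioo (0:ℝ) 1 := by
    intro ω hω
    have h := hXY ω hω
    have hε0 := hGmem ω hω 0
    have hY1 := hYfmem ω hω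
    constructor
    · nlinarith [hY1.1, hε0.1]
    · nlinarith [hY1.2, hε0.2]
  have hPrG : Pr G = 1 := (prob_compl_eq_zero_iff hGmeas).mp (ae_iff.mp hGae)
  have hapos : ∀ i j, 0 < a i j := by
    intro i j
    rw [ha2 i j]
    have hnn : 0 ≤ᵐ[Pr] fun ω => (X ω) ^ i * (1 - X ω) ^ j :=
      Filter.Eventually.of_forall fun ω =>
        mul_nonneg (pow_nonneg (hXmem ω).1 _) (pow_nonneg (by linarith [(hXmem ω).2]) _)
    have hint : Integrable (fun ω => (X ω) ^ i * (1 - X ω) ^ j) Pr := by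
      refine Integrable.mono' (integrable_const 1)
        (((hXmeas.pow_const i).mul
          ((measurable_const.sub hXmeas).pow_const j)).aestronglyMeasurable) ?_
      exact Filter.Eventually.of_forall fun ω => by
        calc ‖(X ω) ^ i * (1 - X ω) ^ j‖ = |(X ω) ^ i * (1 - X ω) ^ j| := rfl
          _ ≤ 1 := aux_abs_le_one (hXmem ω) i j
    rw [integral_pos_iff_support_of_nonneg_ae hnn hint]
    have hsub : G ⊆ Function.support (fun ω => (X ω) ^ i * (1 - X ω) ^ j) := by
      intro ω hω
      have h := hXpos ω hω
      exact ne_of_gt (mul_pos (pow_pos h.1 _) (pow_pos (by linarith [h.2]) _))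
    calc (0:ℝ≥0∞) < 1 := zero_lt_one
      _ = Pr G := hPrG.symm
      _ ≤ Pr (Function.support (fun ω => (X ω) ^ i * (1 - X ω) ^ j)) := measure_mono hsub
  -- partial sums
  have hpartial_mem : ∀ (c : ℕ → ℝ), (∀ n, c n ∈ Icc (0:ℝ) 1) → ∀ N,
      (1 - lam) * ∑ n ∈ Finset.range N, lam ^ n * c n ∈ Icc (0:ℝ) 1 := by
    intro c hc N
    constructor
    · exact mul_nonneg hlam1.le
        (Finset.sum_nonneg fun n _ => mul_nonneg (pow_nonneg hl0.le _) (hc n).1)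
    · have h2 : ∑ n ∈ Finset.range N, lam ^ n * c n ≤ (1 - lam)⁻¹ := by
        calc ∑ n ∈ Finset.range N, lam ^ n * c n ≤ ∑ n ∈ Finset.range N, lam ^ n :=
              Finset.sum_le_sum fun n _ =>
                mul_le_of_le_one_right (pow_nonneg hl0.le _) (hc n).2
          _ ≤ ∑' n, lam ^ n := Summable.sum_le_tsum _ (fun n _ => pow_nonneg hl0.le _)
              (summable_geometric_of_lt_one hl0.le hl1)
          _ = (1 - lam)⁻¹ := tsum_geometric_of_lt_one hl0.le hl1
      calc (1 - lam) * ∑ n ∈ Finset.range N, lam ^ n * c n ≤ (1 - lam) * (1 - lam)⁻¹ :=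
            mul_le_mul_of_nonneg_left h2 hlam1.le
        _ = 1 := mul_inv_cancel₀ hlam1.ne'
  set SN : ℕ → Ω → ℝ := fun N ω => (1 - lam) * ∑ n ∈ Finset.range N, lam ^ n * ε n ω
    with hSN_def
  set TN : ℕ → Ω → ℝ := fun N ω => (1 - lam) * ∑ n ∈ Finset.range N, lam ^ n * ε (n + 1) ω
    with hTN_def
  have hSNmeas : ∀ N, Measurable (SN N) := fun N =>
    (Finset.measurable_sum _ fun n _ => (hmeas n).const_mul _).const_mul _
  have hTNmeas : ∀ N, Measurable (TN N) := fun N =>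
    (Finset.measurable_sum _ fun n _ => (hmeas (n + 1)).const_mul _).const_mul _
  have hSNmem : ∀ N, ∀ ω ∈ G, SN N ω ∈ Icc (0:ℝ) 1 := fun N ω hω =>
    hpartial_mem _ (fun n => ⟨(hGmem ω hω n).1.le, (hGmem ω hω n).2.le⟩) N
  have hTNmem : ∀ N, ∀ ω ∈ G, TN N ω ∈ Icc (0:ℝ) 1 := fun N ω hω =>
    hpartial_mem _ (fun n => ⟨(hGmem ω hω (n + 1)).1.le, (hGmem ω hω (n + 1)).2.le⟩) N
  -- convergence of moments of partial sums
  have hc_tendsto : ∀ k l, Tendsto (fun N => ∫ ω, (SN N ω) ^ k * (1 - SN N ω) ^ l ∂Pr)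
      atTop (𝓝 (a k l)) := by
    intro k l
    rw [ha2 k l]
    refine tendsto_integral_of_dominated_convergence (fun _ => 1)
      (fun N => (((hSNmeas N).pow_const k).mul
        ((measurable_const.sub (hSNmeas N)).pow_const l)).aestronglyMeasurable)
      (integrable_const 1) ?_ ?_
    · intro N
      filter_upwards [hGae] with ω hω
      calc ‖(SN N ω) ^ k * (1 - SN N ω) ^ l‖ = |(SN N ω) ^ k * (1 - SN N ω) ^ l| := rfl
        _ ≤ 1 := aux_abs_le_one (hSNmem N ω hω) k l
    · filter_upwards [hGae] with ω hω
      have h1 : Tendsto (fun N => SN N ω) atTop (𝓝 (X ω)) := by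
        rw [hX_def, indicator_of_mem hω, hXf_def]
        have hsm := hsum (fun n => ε n ω)
          (fun n => ⟨(hGmem ω hω n).1.le, (hGmem ω hω n).2.le⟩)
        exact (hsm.hasSum.tendsto_sum_nat).const_mul (1 - lam)
      have hφcont : Continuous (fun x : ℝ => x ^ k * (1 - x) ^ l) :=
        (continuous_id.pow k).mul ((continuous_const.sub continuous_id).pow l)
      exact (hφcont.tendsto (X ω)).comp h1
  have hd_tendsto : ∀ k l, Tendsto (fun N => ∫ ω, (TN N ω) ^ k * (1 - TN N ω) ^ l ∂Pr)
      atTop (𝓝 (a k l)) := by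
    intro k l
    have hg : Measurable (fun x : ℝ => ((1 - lam) * x) ^ k * (1 - (1 - lam) * x) ^ l) :=
      ((measurable_const_mul _).pow_const k).mul
        ((measurable_const.sub (measurable_const_mul _)).pow_const l)
    have heq : ∀ N, ∫ ω, (TN N ω) ^ k * (1 - TN N ω) ^ l ∂Pr
        = ∫ ω, (SN N ω) ^ k * (1 - SN N ω) ^ l ∂Pr := by
      intro N
      have hmap := aux_map_sum_eq lam hmeas hlaw hindep (fun n => hmeas (n + 1))
        (fun n => hlaw (n + 1)) (aux_precomp hindep Nat.succ_injective) N
      have e1 : ∫ ω, (TN N ω) ^ k * (1 - TN N ω) ^ l ∂Pr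
          = ∫ x, ((1 - lam) * x) ^ k * (1 - (1 - lam) * x) ^ l
              ∂(Measure.map (fun ω => ∑ n ∈ Finset.range N, lam ^ n * ε (n + 1) ω) Pr) := by
        rw [integral_map (Finset.measurable_sum _ fun n _ =>
          (hmeas (n + 1)).const_mul _).aemeasurable hg.aestronglyMeasurable]
      have e2 : ∫ ω, (SN N ω) ^ k * (1 - SN N ω) ^ l ∂Pr
          = ∫ x, ((1 - lam) * x) ^ k * (1 - (1 - lam) * x) ^ l
              ∂(Measure.map (fun ω => ∑ n ∈ Finset.range N, lam ^ n * ε n ω) Pr) := by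
        rw [integral_map (Finset.measurable_sum _ fun n _ =>
          (hmeas n).const_mul _).aemeasurable hg.aestronglyMeasurable]
      rw [e1, ← hmap, ← e2]
    simp only [heq]
    exact hc_tendsto k l
  -- decomposition of partial sums
  have hdecomp : ∀ N ω, SN (N + 1) ω = lam * TN N ω + (1 - lam) * ε 0 ω := by
    intro N ω
    rw [hSN_def, hTN_def]
    show (1 - lam) * ∑ n ∈ Finset.range (N + 1), lam ^ n * ε n ω
      = lam * ((1 - lam) * ∑ n ∈ Finset.range N, lam ^ n * ε (n + 1) ω) + (1 - lam) * ε 0 ω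
    rw [Finset.sum_range_succ']
    have h2 : ∑ n ∈ Finset.range N, lam ^ (n + 1) * ε (n + 1) ω
        = lam * ∑ n ∈ Finset.range N, lam ^ n * ε (n + 1) ω := by
      rw [Finset.mul_sum]
      exact Finset.sum_congr rfl fun n _ => by ring
    rw [h2, pow_zero, one_mul]
    ring
  -- finite-level duality identity
  have hfinite : ∀ n₁ n₂ N, ∫ ω, (SN (N + 1) ω) ^ n₁ * (1 - SN (N + 1) ω) ^ n₂ ∂Pr
      = ∑ k₁ ∈ Finset.range (n₁ + 1), ∑ k₂ ∈ Finset.range (n₂ + 1),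
          A k₁ k₂ n₁ n₂ * ∫ ω, (TN N ω) ^ k₁ * (1 - TN N ω) ^ k₂ ∂Pr := by
    intro n₁ n₂ N
    have hIndep : IndepFun (TN N) (ε 0) Pr := by
      have hfam : iIndepFun
          (fun n => if n = 0 then ε 0 else fun ω => lam ^ (n - 1) * ε n ω) Pr := by
        have := hindep.comp (fun n x => if n = 0 then x else lam ^ (n - 1) * x)
          (fun n => by
            by_cases hn : n = 0
            · simp only [hn, if_pos]; exact measurable_id
            · simp only [if_neg hn]; exact measurable_const_mul _)
        convert this using 2 with n
        by_cases hn : n = 0 <;> simp [hn] <;> rfl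
      have h0 : (0 : ℕ) ∉ (Finset.range N).image (· + 1) := by
        simp
      have hW := hfam.indepFun_finset_sum_of_notMem
        (fun n => by
          by_cases hn : n = 0
          · simp only [hn, if_pos]; exact hmeas 0
          · simp only [if_neg hn]; exact (hmeas n).const_mul _) h0
      have hWeq : (∑ j ∈ (Finset.range N).image (· + 1),
          (fun n => if n = 0 then ε 0 else fun ω => lam ^ (n - 1) * ε n ω) j)
          = fun ω => ∑ n ∈ Finset.range N, lam ^ n * ε (n + 1) ω := by
        funext ω
        rw [Finset.sum_apply]
        rw [Finset.sum_image (fun a _ b _ h => by omega)]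
        exact Finset.sum_congr rfl fun n _ => by
          simp [Nat.succ_ne_zero]
      rw [hWeq] at hW
      simp only [if_pos rfl] at hW
      have := hW.comp (measurable_const_mul (1 - lam)) measurable_id
      exact this
    haveI : IsProbabilityMeasure (Measure.map (TN N) Pr) :=
      Measure.isProbabilityMeasure_map (hTNmeas N).aemeasurable
    have hpair : Measure.map (fun ω => (TN N ω, ε 0 ω)) Pr
        = (Measure.map (TN N) Pr).prod ν := by
      rw [(indepFun_iff_map_prod_eq_prod_map_map (hTNmeas N).aemeasurable
        (hmeas 0).aemeasurable).mp hIndep, hlaw 0]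
    have hTNae : ∀ᵐ y ∂(Measure.map (TN N) Pr), y ∈ Icc (0:ℝ) 1 := by
      rw [ae_iff]
      show (Measure.map (TN N) Pr) (Icc (0:ℝ) 1)ᶜ = 0
      rw [Measure.map_apply (hTNmeas N) measurableSet_Icc.compl]
      refine measure_mono_null ?_ (ae_iff.mp hGae)
      intro ω hω hωG
      exact hω (hTNmem N ω hωG)
    have hψm : Measurable (fun p : ℝ × ℝ =>
        (lam * p.1 + (1 - lam) * p.2) ^ n₁ * (1 - (lam * p.1 + (1 - lam) * p.2)) ^ n₂) := by
      have hb : Measurable (fun p : ℝ × ℝ => lam * p.1 + (1 - lam) * p.2) :=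
        (measurable_fst.const_mul _).add (measurable_snd.const_mul _)
      exact ((hb.pow_const n₁).mul ((measurable_const.sub hb).pow_const n₂))
    have hψint : Integrable (fun p : ℝ × ℝ =>
        (lam * p.1 + (1 - lam) * p.2) ^ n₁ * (1 - (lam * p.1 + (1 - lam) * p.2)) ^ n₂)
        ((Measure.map (TN N) Pr).prod ν) := by
      refine Integrable.mono' (integrable_const 1) hψm.aestronglyMeasurable ?_
      have hae : ∀ᵐ p ∂((Measure.map (TN N) Pr).prod ν),
          p.1 ∈ Icc (0:ℝ) 1 ∧ p.2 ∈ Icc (0:ℝ) 1 := by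
        rw [ae_iff]
        refine measure_mono_null (fun p hp => ?_)
          (?_ : ((Measure.map (TN N) Pr).prod ν)
            ((Icc (0:ℝ) 1)ᶜ ×ˢ univ ∪ univ ×ˢ (Icc (0:ℝ) 1)ᶜ) = 0)
        · simp only [mem_setOf_eq, not_and_or] at hp
          rcases hp with h | h
          · exact Or.inl ⟨h, mem_univ _⟩
          · exact Or.inr ⟨mem_univ _, h⟩
        · refine le_antisymm (le_trans (measure_union_le _ _) ?_) zero_le
          rw [Measure.prod_prod, Measure.prod_prod]
          have hTNc : (Measure.map (TN N) Pr) (Icc (0:ℝ) 1)ᶜ = 0 := ae_iff.mp hTNae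
          have hνc : ν (Icc (0:ℝ) 1)ᶜ = 0 := ae_iff.mp hνae
          rw [hTNc, hνc]
          simp
      filter_upwards [hae] with p hp
      have hmem : lam * p.1 + (1 - lam) * p.2 ∈ Icc (0:ℝ) 1 := by
        obtain ⟨⟨h1, h2⟩, ⟨h3, h4⟩⟩ := hp
        constructor
        · nlinarith
        · nlinarith
      calc ‖(lam * p.1 + (1 - lam) * p.2) ^ n₁ * (1 - (lam * p.1 + (1 - lam) * p.2)) ^ n₂‖
          = |(lam * p.1 + (1 - lam) * p.2) ^ n₁ * (1 - (lam * p.1 + (1 - lam) * p.2)) ^ n₂| := rfl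
        _ ≤ 1 := aux_abs_le_one hmem n₁ n₂
    calc ∫ ω, (SN (N + 1) ω) ^ n₁ * (1 - SN (N + 1) ω) ^ n₂ ∂Pr
        = ∫ ω, (lam * TN N ω + (1 - lam) * ε 0 ω) ^ n₁
            * (1 - (lam * TN N ω + (1 - lam) * ε 0 ω)) ^ n₂ ∂Pr := by
          refine integral_congr_ae (Filter.Eventually.of_forall fun ω => ?_)
          simp only [hdecomp]
      _ = ∫ p : ℝ × ℝ, (lam * p.1 + (1 - lam) * p.2) ^ n₁
            * (1 - (lam * p.1 + (1 - lam) * p.2)) ^ n₂ ∂((Measure.map (TN N) Pr).prod ν) := by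
          rw [← hpair, integral_map ((hTNmeas N).prodMk (hmeas 0)).aemeasurable
            hψm.aestronglyMeasurable]
      _ = ∫ y, (∫ e, (lam * y + (1 - lam) * e) ^ n₁
            * (1 - (lam * y + (1 - lam) * e)) ^ n₂ ∂ν) ∂(Measure.map (TN N) Pr) := by
          rw [integral_prod _ hψint]
      _ = ∫ y, (∑ k₁ ∈ Finset.range (n₁ + 1), ∑ k₂ ∈ Finset.range (n₂ + 1),
            ((n₁.choose k₁ : ℝ) * (n₂.choose k₂ : ℝ) * lam ^ (k₁ + k₂)
              * (1 - lam) ^ (n₁ + n₂ - k₁ - k₂)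
              * ∫ e, e ^ (n₁ - k₁) * (1 - e) ^ (n₂ - k₂) ∂ν) * (y ^ k₁ * (1 - y) ^ k₂))
            ∂(Measure.map (TN N) Pr) := by
          refine integral_congr_ae (Filter.Eventually.of_forall fun y => ?_)
          exact aux_key_i hνae n₁ n₂ y
      _ = ∑ k₁ ∈ Finset.range (n₁ + 1), ∑ k₂ ∈ Finset.range (n₂ + 1),
            A k₁ k₂ n₁ n₂ * ∫ ω, (TN N ω) ^ k₁ * (1 - TN N ω) ^ k₂ ∂Pr := by
          rw [integral_finset_sum _ fun k₁ _ => integrable_finset_sum _ fun k₂ _ =>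
            (aux_integrable hTNae k₁ k₂).const_mul _]
          refine Finset.sum_congr rfl fun k₁ _ => ?_
          rw [integral_finset_sum _ fun k₂ _ => (aux_integrable hTNae k₁ k₂).const_mul _]
          refine Finset.sum_congr rfl fun k₂ _ => ?_
          rw [MeasureTheory.integral_const_mul, hA,
            integral_map (hTNmeas N).aemeasurable (aux_phi_meas k₁ k₂).aestronglyMeasurable]
  -- the stationarity identity (ii)
  have hii : ∀ n₁ n₂, ∑ k₁ ∈ Finset.range (n₁ + 1), ∑ k₂ ∈ Finset.range (n₂ + 1),
      A k₁ k₂ n₁ n₂ * a k₁ k₂ = a n₁ n₂ := by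
    intro n₁ n₂
    have hL : Tendsto (fun N => ∫ ω, (SN (N + 1) ω) ^ n₁ * (1 - SN (N + 1) ω) ^ n₂ ∂Pr)
        atTop (𝓝 (a n₁ n₂)) := (hc_tendsto n₁ n₂).comp (tendsto_add_atTop_nat 1)
    have hR : Tendsto (fun N => ∑ k₁ ∈ Finset.range (n₁ + 1), ∑ k₂ ∈ Finset.range (n₂ + 1),
        A k₁ k₂ n₁ n₂ * ∫ ω, (TN N ω) ^ k₁ * (1 - TN N ω) ^ k₂ ∂Pr)
        atTop (𝓝 (∑ k₁ ∈ Finset.range (n₁ + 1), ∑ k₂ ∈ Finset.range (n₂ + 1),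
          A k₁ k₂ n₁ n₂ * a k₁ k₂)) := by
      refine tendsto_finset_sum _ fun k₁ _ => tendsto_finset_sum _ fun k₂ _ => ?_
      exact (hd_tendsto k₁ k₂).const_mul _
    have hL' : Tendsto (fun N => ∑ k₁ ∈ Finset.range (n₁ + 1), ∑ k₂ ∈ Finset.range (n₂ + 1),
        A k₁ k₂ n₁ n₂ * ∫ ω, (TN N ω) ^ k₁ * (1 - TN N ω) ^ k₂ ∂Pr)
        atTop (𝓝 (a n₁ n₂)) := by
      refine hL.congr fun N => ?_
      exact hfinite n₁ n₂ N
    exact tendsto_nhds_unique hR hL'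
  -- assemble the conclusion
  refine ⟨hapos, ?_, hii, ?_, ?_⟩
  · -- part (i)
    intro n₁ n₂ r hr
    have hcong : ∫ e, (lam * r + (1 - lam) * e) ^ n₁ * (1 - lam * r - (1 - lam) * e) ^ n₂ ∂ν
        = ∫ e, (lam * r + (1 - lam) * e) ^ n₁ * (1 - (lam * r + (1 - lam) * e)) ^ n₂ ∂ν := by
      refine integral_congr_ae (Filter.Eventually.of_forall fun e => ?_)
      simp only [sub_add_eq_sub_sub]
    rw [hcong, aux_key_i hνae n₁ n₂ r]
    refine Finset.sum_congr rfl fun k₁ _ => Finset.sum_congr rfl fun k₂ _ => ?_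
    rw [hA]
  · -- part: Q row-stochastic
    intro n₁ n₂
    constructor
    · intro k₁ k₂
      have hAnn : 0 ≤ A k₁ k₂ n₁ n₂ := by
        rw [hA]
        refine mul_nonneg (mul_nonneg (mul_nonneg (mul_nonneg ?_ ?_) ?_) ?_) ?_
        · exact Nat.cast_nonneg _
        · exact Nat.cast_nonneg _
        · exact pow_nonneg hl0.le _
        · exact pow_nonneg hlam1.le _
        · refine integral_nonneg_of_ae ?_
          filter_upwards [hνae] with e he
          exact mul_nonneg (pow_nonneg he.1 _) (pow_nonneg (by linarith [he.2]) _)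
      exact div_nonneg (mul_nonneg hAnn (hapos k₁ k₂).le) (hapos n₁ n₂).le
    · simp only [← Finset.sum_div]
      rw [hii n₁ n₂]
      exact div_self (hapos n₁ n₂).ne'
  · -- part (iii)
    intro n₁ n₂ r hr
    rw [integral_div, aux_key_i hνae n₁ n₂ r]
    rw [Finset.sum_div]
    refine Finset.sum_congr rfl fun k₁ _ => ?_
    rw [Finset.sum_div]
    refine Finset.sum_congr rfl fun k₂ _ => ?_
    rw [hA]
    have h1 := (hapos k₁ k₂).ne'
    have h2 := (hapos n₁ n₂).ne'
    field_simp
end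

section
/- Let ν be a probability density on [0,1] with ν_{nm} := ∫₀¹ ε^n(1-ε)^m ν(ε) dε > 0 for all n, m ∈ ℕ. Let μ and μ₀ be two probability measures on [0,∞)² with all joint moments finite and strictly positive, and suppose both satisfy the invariance identity ∫ Pf dμ = ∫ f dμ (respectively for μ₀) for every monomial f(x,y) = x^n y^m. Then for all n, m ∈ ℕ, the ratio (∫ x^n y^m μ(dx dy)) / (∫ x^n y^m μ₀(dx dy)) depends only on n + m; explicitly, ∫ x^n y^m μ(dx dy) = ν_{nm} ∫ (x+y)^{n+m} μ(dx dy), so the ratio equals (∫ (x+y)^{n+m} dμ)/(∫ (x+y)^{n+m} dμ₀). -/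
open MeasureTheory Set

/-- for the energy redistribution model with `s`-independent redistribution
density `ν`, the joint moments under any invariant measure `μ` satisfy
`∫ x^n y^m dμ = ν_{nm} ∫ (x+y)^{n+m} dμ`; hence the ratio of the joint moments of two
invariant measures `μ` and `μ₀` depends only on `n + m`. -/
theorem moments_ratio_depends_only_on_sum
    (ν : ℝ → ℝ) (hνm : Measurable ν)
    (hνnn : ∀ e ∈ Icc (0:ℝ) 1, 0 ≤ ν e)
    (hνprob : ∫ e in (0:ℝ)..1, ν e = 1)
    (νc : ℕ → ℕ → ℝ)
    (hνc : ∀ n m, νc n m = ∫ e in (0:ℝ)..1, e ^ n * (1 - e) ^ m * ν e)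
    (hνcpos : ∀ n m, 0 < νc n m)
    (μ μ₀ : Measure (ℝ × ℝ)) [IsProbabilityMeasure μ] [IsProbabilityMeasure μ₀]
    (hquad : μ (Ici 0 ×ˢ Ici 0) = 1) (hquad₀ : μ₀ (Ici 0 ×ˢ Ici 0) = 1)
    (hint : ∀ n m, Integrable (fun q : ℝ × ℝ => q.1 ^ n * q.2 ^ m) μ)
    (hint₀ : ∀ n m, Integrable (fun q : ℝ × ℝ => q.1 ^ n * q.2 ^ m) μ₀)
    (hpos : ∀ n m, 0 < ∫ q, q.1 ^ n * q.2 ^ m ∂μ)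
    (hpos₀ : ∀ n m, 0 < ∫ q, q.1 ^ n * q.2 ^ m ∂μ₀)
    (hinv : ∀ n m : ℕ,
      ∫ q, (∫ e in (0:ℝ)..1,
        (e * (q.1 + q.2)) ^ n * ((1 - e) * (q.1 + q.2)) ^ m * ν e) ∂μ
        = ∫ q, q.1 ^ n * q.2 ^ m ∂μ)
    (hinv₀ : ∀ n m : ℕ,
      ∫ q, (∫ e in (0:ℝ)..1,
        (e * (q.1 + q.2)) ^ n * ((1 - e) * (q.1 + q.2)) ^ m * ν e) ∂μ₀
        = ∫ q, q.1 ^ n * q.2 ^ m ∂μ₀) :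
    (∀ n m : ℕ,
      ∫ q, q.1 ^ n * q.2 ^ m ∂μ = νc n m * ∫ q, (q.1 + q.2) ^ (n + m) ∂μ) ∧
    (∀ n m : ℕ,
      ∫ q, q.1 ^ n * q.2 ^ m ∂μ₀ = νc n m * ∫ q, (q.1 + q.2) ^ (n + m) ∂μ₀) ∧
    (∀ n m : ℕ,
      (∫ q, q.1 ^ n * q.2 ^ m ∂μ) / (∫ q, q.1 ^ n * q.2 ^ m ∂μ₀)
        = (∫ q, (q.1 + q.2) ^ (n + m) ∂μ) / (∫ q, (q.1 + q.2) ^ (n + m) ∂μ₀)) := by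

  have key : ∀ (n m : ℕ) (s : ℝ), (∫ e in (0:ℝ)..1,
      (e * s) ^ n * ((1 - e) * s) ^ m * ν e) = νc n m * s ^ (n + m) := by
    intro n m s
    have : (∫ e in (0:ℝ)..1, (e * s) ^ n * ((1 - e) * s) ^ m * ν e)
        = ∫ e in (0:ℝ)..1, s ^ (n + m) * (e ^ n * (1 - e) ^ m * ν e) := by
      apply intervalIntegral.integral_congr
      intro e _
      simp only [mul_pow, pow_add]
      ring
    rw [this, intervalIntegral.integral_const_mul, hνc, mul_comm]
  have main : ∀ (τ : Measure (ℝ × ℝ)),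
      (∀ n m : ℕ, ∫ q, (∫ e in (0:ℝ)..1,
        (e * (q.1 + q.2)) ^ n * ((1 - e) * (q.1 + q.2)) ^ m * ν e) ∂τ
        = ∫ q, q.1 ^ n * q.2 ^ m ∂τ) →
      ∀ n m : ℕ,
        ∫ q, q.1 ^ n * q.2 ^ m ∂τ = νc n m * ∫ q, (q.1 + q.2) ^ (n + m) ∂τ := by
    intro τ hτ n m
    rw [← hτ n m]
    have : (fun q : ℝ × ℝ => ∫ e in (0:ℝ)..1,
        (e * (q.1 + q.2)) ^ n * ((1 - e) * (q.1 + q.2)) ^ m * ν e)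
        = fun q : ℝ × ℝ => νc n m * (q.1 + q.2) ^ (n + m) := by
      funext q; exact key n m (q.1 + q.2)
    rw [this, integral_const_mul]
  have h1 := main μ hinv
  have h2 := main μ₀ hinv₀
  refine ⟨h1, h2, fun n m => ?_⟩
  rw [h1 n m, h2 n m, mul_div_mul_left _ _ (hνcpos n m).ne']
end

section
/- Let S be a finite set, p : S×S → [0,∞) symmetric with ∑_{j∈S} p(i,j) = 1 for every i, λ ∈ [0,1), and ν(s,dε) a probability kernel from [0,∞) to [0,1] with ∫₀¹ ε ν(s,dε) = 1/2 for every s. Let L^λ be the N-agent wealth distribution generator L^λ f(x) = ∑_{j,k ∈ S} p(j,k) ∫₀¹ (f(T^{jk}_{λ,ε} x) - f(x)) ν(x_j+x_k, dε). If μ is a probability measure on [0,∞)^S with finite first moments ρ_i = ∫ x_i μ(dx) such that ∫ L^λ f_i dμ = 0 for every coordinate function f_i(x) = x_i, then ρ is harmonic for the random walk kernel p: ∑_{j∈S} p(i,j) ρ_j = ρ_i for every i ∈ S. -/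
open MeasureTheory Set ProbabilityTheory

lemma aux_integral_affine (ν : Kernel ℝ ℝ) [IsMarkovKernel ν]
    (hνsupp : ∀ s : ℝ, ν s (Icc 0 1) = 1)
    (hνmean : ∀ s : ℝ, 0 ≤ s → ∫ e, e ∂(ν s) = 1 / 2)
    (s : ℝ) (hs : 0 ≤ s) (a b : ℝ) :
    ∫ e, (a * e + b) ∂(ν s) = a * (1 / 2) + b := by
  have hae : ∀ᵐ e ∂(ν s), e ∈ Icc (0:ℝ) 1 := by
    rw [ae_iff]
    have h : {e | ¬ e ∈ Icc (0:ℝ) 1} = (Icc (0:ℝ) 1)ᶜ := rfl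
    rw [h, measure_compl measurableSet_Icc (measure_ne_top _ _), hνsupp s, measure_univ]
    simp
  have hone : Integrable (fun e : ℝ => e) (ν s) := by
    apply Integrable.mono' (integrable_const (1:ℝ)) measurable_id.aestronglyMeasurable
    filter_upwards [hae] with e he
    simp only [id_eq]; rw [Real.norm_eq_abs, abs_le]
    exact ⟨by linarith [he.1], he.2⟩
  rw [integral_add (hone.const_mul a) (integrable_const b), integral_const,
    integral_const_mul, hνmean s hs]
  simp

/-- in the `N`-agent wealth distribution model with symmetric transaction
probabilities `p`, saving propensity `λ ∈ [0,1)` and redistribution kernel `ν` of mean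
`1/2`, if `μ` is a probability measure on `[0,∞)^S` with finite first moments
`ρ_i = ∫ x_i dμ` against which the generator integrates to zero on the coordinate
functions, then `ρ` is harmonic for the random walk kernel `p`:
`∑_j p(i,j) ρ_j = ρ_i` for every `i`. -/
theorem stationary_first_moments_are_harmonic
    {S : Type*} [Fintype S] [DecidableEq S]
    (p : S → S → ℝ)
    (hpnn : ∀ i j, 0 ≤ p i j)
    (hpsymm : ∀ i j, p i j = p j i)
    (hpsum : ∀ i, ∑ j, p i j = 1)
    (lam : ℝ) (hlam : lam ∈ Ico (0:ℝ) 1)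
    (ν : Kernel ℝ ℝ) [IsMarkovKernel ν]
    (hνsupp : ∀ s : ℝ, ν s (Icc 0 1) = 1)
    (hνmean : ∀ s : ℝ, 0 ≤ s → ∫ e, e ∂(ν s) = 1 / 2)
    (T : S → S → ℝ → (S → ℝ) → (S → ℝ))
    (hT : ∀ j k e x i, T j k e x i =
      if i = j then lam * x j + (1 - lam) * e * (x j + x k)
      else if i = k then lam * x k + (1 - lam) * (1 - e) * (x j + x k)
      else x i)
    (μ : Measure (S → ℝ)) [IsProbabilityMeasure μ]
    (hμsupp : μ {x : S → ℝ | ∀ i, 0 ≤ x i} = 1)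
    (hμint : ∀ i : S, Integrable (fun x : S → ℝ => x i) μ)
    (ρ : S → ℝ) (hρ : ∀ i, ρ i = ∫ x, x i ∂μ)
    (hstat : ∀ i : S,
      ∫ x, (∑ j, ∑ k, p j k * ∫ e, (T j k e x i - x i) ∂(ν (x j + x k))) ∂μ = 0) :
    ∀ i : S, ∑ j, p i j * ρ j = ρ i := by
  intro i
  -- pointwise identity on the nonnegative orthant
  have hpt : ∀ x : S → ℝ, (∀ i, 0 ≤ x i) →
      (∑ j, ∑ k, p j k * ∫ e, (T j k e x i - x i) ∂(ν (x j + x k)))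
        = (1 - lam) * ∑ j, p i j * (x j - x i) := by
    intro x hx
    have key : ∀ j k : S, (∫ e, (T j k e x i - x i) ∂(ν (x j + x k)))
        = (if i = j then (1 - lam) / 2 * (x k - x j)
           else if i = k then (1 - lam) / 2 * (x j - x k) else 0) := by
      intro j k
      by_cases hij : i = j
      · subst hij
        rw [if_pos rfl]
        have hfe : (fun e : ℝ => T i k e x i - x i)
            = fun e => ((1 - lam) * (x i + x k)) * e + (lam * x i - x i) := by
          funext e; rw [hT, if_pos rfl]; ring
        rw [hfe, aux_integral_affine ν hνsupp hνmean _ (add_nonneg (hx i) (hx k))]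
        ring
      · rw [if_neg hij]
        by_cases hik : i = k
        · subst hik
          rw [if_pos rfl]
          have hfe : (fun e : ℝ => T j i e x i - x i)
              = fun e => (-((1 - lam) * (x j + x i))) * e
                  + (lam * x i + (1 - lam) * (x j + x i) - x i) := by
            funext e; rw [hT, if_neg hij, if_pos rfl]; ring
          rw [hfe, aux_integral_affine ν hνsupp hνmean _ (add_nonneg (hx j) (hx i))]
          ring
        · rw [if_neg hik]
          have hfe : (fun e : ℝ => T j k e x i - x i) = fun _ => (0:ℝ) := by
            funext e; rw [hT, if_neg hij, if_neg hik]; ring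
          rw [hfe, integral_zero]
    have h1 : ∀ j k : S, p j k * (if i = j then (1 - lam) / 2 * (x k - x j)
           else if i = k then (1 - lam) / 2 * (x j - x k) else 0)
        = (if i = j then p j k * ((1 - lam) / 2 * (x k - x j)) else 0)
          + (if i = k then p j k * ((1 - lam) / 2 * (x j - x k)) else 0) := by
      intro j k
      split_ifs with h h'
      · subst h; subst h'; ring
      · ring
      · ring
      · ring
    calc (∑ j, ∑ k, p j k * ∫ e, (T j k e x i - x i) ∂(ν (x j + x k)))
        = ∑ j, ∑ k, ((if i = j then p j k * ((1 - lam) / 2 * (x k - x j)) else 0)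
          + (if i = k then p j k * ((1 - lam) / 2 * (x j - x k)) else 0)) := by
          refine Finset.sum_congr rfl fun j _ => Finset.sum_congr rfl fun k _ => ?_
          rw [key j k, h1 j k]
      _ = (∑ j, ∑ k, (if i = j then p j k * ((1 - lam) / 2 * (x k - x j)) else 0))
          + (∑ j, ∑ k, (if i = k then p j k * ((1 - lam) / 2 * (x j - x k)) else 0)) := by
          rw [← Finset.sum_add_distrib]
          exact Finset.sum_congr rfl fun j _ => Finset.sum_add_distrib
      _ = (∑ k, p i k * ((1 - lam) / 2 * (x k - x i)))
          + (∑ j, p j i * ((1 - lam) / 2 * (x j - x i))) := by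
          congr 1
          · rw [Finset.sum_comm]
            refine Finset.sum_congr rfl fun k _ => ?_
            simp
          · refine Finset.sum_congr rfl fun j _ => ?_
            simp
      _ = (1 - lam) * ∑ j, p i j * (x j - x i) := by
          rw [Finset.mul_sum, ← Finset.sum_add_distrib]
          refine Finset.sum_congr rfl fun j _ => ?_
          rw [hpsymm j i]
          ring
  -- a.e. nonnegativity
  have hmeas : MeasurableSet {x : S → ℝ | ∀ i, 0 ≤ x i} := by
    have h : {x : S → ℝ | ∀ i, 0 ≤ x i} = ⋂ i, (fun x : S → ℝ => x i) ⁻¹' (Ici 0) := by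
      ext x; simp [Set.mem_iInter]
    rw [h]
    exact MeasurableSet.iInter fun i => (measurable_pi_apply i) measurableSet_Ici
  have hae : ∀ᵐ x ∂μ, ∀ i, 0 ≤ x i := by
    rw [ae_iff]
    have h : {x : S → ℝ | ¬ ∀ i, 0 ≤ x i} = {x : S → ℝ | ∀ i, 0 ≤ x i}ᶜ := rfl
    rw [h, measure_compl hmeas (measure_ne_top _ _), hμsupp, measure_univ]
    simp
  have hcong : ∫ x, (∑ j, ∑ k, p j k * ∫ e, (T j k e x i - x i) ∂(ν (x j + x k))) ∂μ
      = ∫ x, (1 - lam) * ∑ j, p i j * (x j - x i) ∂μ := by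
    refine integral_congr_ae ?_
    filter_upwards [hae] with x hx
    exact hpt x hx
  have hval : ∫ x, (1 - lam) * ∑ j, p i j * (x j - x i) ∂μ
      = (1 - lam) * ((∑ j, p i j * ρ j) - ρ i) := by
    rw [integral_const_mul]
    congr 1
    have hintj : ∀ j : S, Integrable (fun x : S → ℝ => p i j * (x j - x i)) μ :=
      fun j => ((hμint j).sub (hμint i)).const_mul _
    rw [integral_finset_sum _ (fun j _ => hintj j)]
    have h2 : ∀ j : S, ∫ x, p i j * (x j - x i) ∂μ = p i j * (ρ j - ρ i) := by
      intro j
      rw [integral_const_mul, integral_sub (hμint j) (hμint i), hρ j, hρ i]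
    simp only [h2]
    have h3 : ∑ j, p i j * (ρ j - ρ i) = (∑ j, p i j * ρ j) - (∑ j, p i j) * ρ i := by
      rw [Finset.sum_mul, ← Finset.sum_sub_distrib]
      exact Finset.sum_congr rfl fun j _ => by ring
    rw [h3, hpsum i, one_mul]
  have hzero : (1 - lam) * ((∑ j, p i j * ρ j) - ρ i) = 0 := by
    rw [← hval, ← hcong, hstat i]
  have hne : (1 - lam) ≠ 0 := by
    have := hlam.2
    intro h; linarith
  have := mul_eq_zero.mp hzero
  rcases this with h | h
  · exact absurd h hne
  · linarith
end
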